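/- In the Setting, fix σ > 1/2 and 0 < γ < (2σ−1)/(2σ), let τ := μ/L, and assume τ·dist(x, X*)^{1/δ−1} ≤ 1 for every x ∈ T_γ \ X* (which holds when L is an upper bound for the subgradient norms on T₁). Let (x_k)_{k≥0} be generated by the projected subgradient iteration with Scaled Polyak's step-sizes α_k = (f(x_k) − f*)/(σ‖ζ_k‖) (when ζ_k ≠ 0), with initial point x_0 ∈ T_γ. Then: (a) for every k, x_k ∈ T_γ and dist²(x_{k+1}, X*) ≤ (1 − (2σ(1−γ) − 1)·σ^{−2}·τ_k²)·dist²(x_k, X*), where τ_k := τ·dist(x_k, X*)^{1/δ−1} for x_k ∉ X* and τ_k := 0 for x_k ∈ X*; and (b) if δ = 1, the sequence dist(x_k, X*) converges Q-linearly to zero with rate √(1 − (2σ(1−γ) − 1)σ^{−2}τ²). -/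

import Mathlib

open scoped RealInnerProductSpace

/-- Projection onto a convex set does not increase distance to points of the set
(squared form), stated via the minimizing property. -/
lemma proj_sq_le' {F : Type*} [NormedAddCommGroup F] [InnerProductSpace ℝ F] {K : Set F}
    (hK : Convex ℝ K) {p z w : F} (hp : p ∈ K) (hw : w ∈ K)
    (hmin : ∀ y ∈ K, dist p z ≤ dist y z) : ‖p - w‖ ^ 2 ≤ ‖z - w‖ ^ 2 := by
  haveI : Nonempty K := ⟨⟨p, hp⟩⟩
  have hinf : ‖z - p‖ = ⨅ y : K, ‖z - y‖ := by
    refine le_antisymm (le_ciInf fun y => ?_) ?_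
    · have h1 := hmin y y.2
      rw [dist_eq_norm, dist_eq_norm] at h1
      calc ‖z - p‖ = ‖p - z‖ := (norm_sub_rev _ _).symm
        _ ≤ ‖(y : F) - z‖ := h1
        _ = ‖z - (y : F)‖ := norm_sub_rev _ _
    · exact ciInf_le ⟨0, by rintro a ⟨y, rfl⟩; exact norm_nonneg _⟩ (⟨p, hp⟩ : K)
  have hVI := (norm_eq_iInf_iff_real_inner_le_zero hK hp).mp hinf w hw
  have hexp : ‖z - w‖ ^ 2 = ‖z - p‖ ^ 2 + 2 * ⟪z - p, p - w⟫ + ‖p - w‖ ^ 2 := by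
    rw [show z - w = (z - p) + (p - w) by abel, norm_add_sq_real]
  have hneg : ⟪z - p, p - w⟫ = -⟪z - p, w - p⟫ := by
    rw [show p - w = -(w - p) by abel, inner_neg_right]
  nlinarith [sq_nonneg ‖z - p‖]

set_option maxHeartbeats 2000000 in
open Classical in
/-- **Scaled Polyak's step-size.** With `σ > 1/2`, `0 < γ < (2σ−1)/(2σ)`
and Scaled Polyak's step-sizes `α_k = (f(x_k) − f*)/(σ‖ζ_k‖)` starting from
`x_0 ∈ T_γ`: (a) all iterates stay in `T_γ` and
`dist²(x_{k+1},X*) ≤ (1 − (2σ(1−γ)−1)σ^{−2}τ_k²) dist²(x_k,X*)`;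
(b) if `δ = 1`, `dist(x_k,X*)` converges Q-linearly with rate
`√(1 − (2σ(1−γ)−1)σ^{−2}τ²)`. -/
theorem scaled_polyak_convergence {n : ℕ}
    (X : Set (EuclideanSpace ℝ (Fin n))) (hXne : X.Nonempty)
    (hXcl : IsClosed X) (hXcv : Convex ℝ X)
    (f : EuclideanSpace ℝ (Fin n) → ℝ) (hf : Continuous f)
    (fstar : ℝ) (Xstar : Set (EuclideanSpace ℝ (Fin n)))
    (hXstar : Xstar = {x ∈ X | f x = fstar}) (hXstarne : Xstar.Nonempty)
    (hfstar : ∀ x ∈ X, fstar ≤ f x)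
    (ρ ν δ μ : ℝ) (hρ : 0 < ρ) (hν : ν ∈ Set.Ioc (0 : ℝ) 1)
    (hδ : δ ∈ Set.Ioc (1 / (1 + ν)) 1) (hμ : 0 < μ)
    (hHEB : ∀ x ∈ X, μ * Metric.infDist x Xstar ^ (1 / δ) ≤ f x - fstar)
    (L : ℝ) (hL : 0 < L) (τ : ℝ) (hτ : τ = μ / L)
    (σ γ : ℝ) (hσ : 1 / 2 < σ) (hγ : 0 < γ ∧ γ < (2 * σ - 1) / (2 * σ))
    (hτtube : ∀ z ∈ X, z ∉ Xstar →
        Metric.infDist z Xstar < (γ * μ / ρ) ^ (δ / (δ * (1 + ν) - 1)) →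
        τ * Metric.infDist z Xstar ^ (1 / δ - 1) ≤ 1)
    (x ζ : ℕ → EuclideanSpace ℝ (Fin n))
    (hx0 : x 0 ∈ X ∧ Metric.infDist (x 0) Xstar <
        (γ * μ / ρ) ^ (δ / (δ * (1 + ν) - 1)))
    (hζsub : ∀ k, ∀ y ∈ X,
        f (x k) + ⟪ζ k, y - x k⟫ - ρ * ‖y - x k‖ ^ (1 + ν) ≤ f y)
    (hζL : ∀ k, ‖ζ k‖ ≤ L)
    (hupd : ∀ k : ℕ, (ζ k = 0 → x (k + 1) = x k) ∧
        (ζ k ≠ 0 → x (k + 1) ∈ X ∧ ∀ y ∈ X,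
          dist (x (k + 1))
              (x k - ((f (x k) - fstar) / (σ * ‖ζ k‖) / ‖ζ k‖) • ζ k) ≤
            dist y (x k - ((f (x k) - fstar) / (σ * ‖ζ k‖) / ‖ζ k‖) • ζ k))) :
    (∀ k : ℕ,
      (x k ∈ X ∧ Metric.infDist (x k) Xstar <
          (γ * μ / ρ) ^ (δ / (δ * (1 + ν) - 1))) ∧
      Metric.infDist (x (k + 1)) Xstar ^ 2 ≤
        (1 - (2 * σ * (1 - γ) - 1) / σ ^ 2 *
            (if x k ∈ Xstar then (0 : ℝ)
              else τ * Metric.infDist (x k) Xstar ^ (1 / δ - 1)) ^ 2) *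
          Metric.infDist (x k) Xstar ^ 2) ∧
    (δ = 1 → ∀ k : ℕ,
      Metric.infDist (x (k + 1)) Xstar ≤
        Real.sqrt (1 - (2 * σ * (1 - γ) - 1) / σ ^ 2 * τ ^ 2) *
          Metric.infDist (x k) Xstar) := by
  obtain ⟨hν0, hν1⟩ := hν
  obtain ⟨hδl, hδ1⟩ := hδ
  obtain ⟨hγ0, hγlt⟩ := hγ
  have h1ν : (0:ℝ) < 1 + ν := by linarith
  have hδ0 : 0 < δ := lt_trans (by positivity) hδl
  have hσ0 : (0:ℝ) < σ := by linarith
  have h2σ : (0:ℝ) < 2 * σ := by linarith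
  have hγ1 : γ < 1 := by
    have h1 : (2 * σ - 1) / (2 * σ) < 1 := by
      rw [div_lt_one h2σ]; linarith
    linarith
  have hD : 0 < δ * (1 + ν) - 1 := by
    rw [div_lt_iff₀ h1ν] at hδl; linarith
  have hCpos : 0 < 2 * σ * (1 - γ) - 1 := by
    rw [lt_div_iff₀ h2σ] at hγlt; nlinarith
  have hXstarcl : IsClosed Xstar := by
    rw [hXstar]; exact hXcl.inter (isClosed_eq hf continuous_const)
  have hXsX : Xstar ⊆ X := by rw [hXstar]; exact fun z hz => hz.1
  -- one-step estimate
  have step : ∀ k : ℕ, x k ∈ X →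
      Metric.infDist (x k) Xstar < (γ * μ / ρ) ^ (δ / (δ * (1 + ν) - 1)) →
      x (k + 1) ∈ X ∧
      Metric.infDist (x (k + 1)) Xstar ^ 2 ≤
        (1 - (2 * σ * (1 - γ) - 1) / σ ^ 2 *
            (if x k ∈ Xstar then (0 : ℝ)
              else τ * Metric.infDist (x k) Xstar ^ (1 / δ - 1)) ^ 2) *
          Metric.infDist (x k) Xstar ^ 2 ∧
      Metric.infDist (x (k + 1)) Xstar ≤ Metric.infDist (x k) Xstar := by
    intro k hkX hkT
    set d := Metric.infDist (x k) Xstar with hd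
    by_cases hxs : x k ∈ Xstar
    · -- at a minimizer: the step size is zero and the iterate does not move
      have hd0 : d = 0 := Metric.infDist_zero_of_mem hxs
      have hfx : f (x k) = fstar := by
        rw [hXstar] at hxs; exact hxs.2
      have hx1 : x (k + 1) = x k := by
        by_cases hz : ζ k = 0
        · exact (hupd k).1 hz
        · obtain ⟨hmem, hmin⟩ := (hupd k).2 hz
          have hz' : x k - ((f (x k) - fstar) / (σ * ‖ζ k‖) / ‖ζ k‖) • ζ k = x k := by
            rw [hfx]; simp
          have h1 := hmin (x k) hkX
          rw [hz'] at h1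
          simp only [dist_self] at h1
          exact eq_of_dist_eq_zero (le_antisymm h1 dist_nonneg)
      rw [hx1]
      refine ⟨hkX, ?_, le_refl _⟩
      rw [← hd, hd0]
      simp [hxs]
    · -- main case
      have hdpos : 0 < d := (hXstarcl.notMem_iff_infDist_pos hXstarne).1 hxs
      have hgap : fstar < f (x k) := by
        rcases lt_or_eq_of_le (hfstar _ hkX) with h | h
        · exact h
        · exact absurd (by rw [hXstar]; exact ⟨hkX, h.symm⟩) hxs
      obtain ⟨xs, hxsXs, hdist⟩ := hXstarcl.exists_infDist_eq_dist hXstarne (x k)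
      have hxsX : xs ∈ X := hXsX hxsXs
      have hfxs : f xs = fstar := by rw [hXstar] at hxsXs; exact hxsXs.2
      have hnorm : ‖x k - xs‖ = d := by rw [hd, hdist, dist_eq_norm]
      have hnorm2 : ‖xs - x k‖ = d := by rw [norm_sub_rev, hnorm]
      set h := f (x k) - fstar with hhdef
      have hpos : 0 < h := by rw [hhdef]; linarith
      -- tube bound: ρ d^{1+ν} ≤ γ μ d^{1/δ}
      have he : 0 < 1 + ν - 1 / δ := by
        have h1 : 1 / δ < 1 + ν := by
          rw [div_lt_iff₀ hδ0]; nlinarith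
        linarith
      have hbase : (0:ℝ) < γ * μ / ρ := by positivity
      have hHEBk : μ * d ^ (1 / δ) ≤ h := hHEB _ hkX
      have hd1δ : 0 < d ^ (1 / δ) := Real.rpow_pos_of_pos hdpos _
      have hdnu : ρ * d ^ (1 + ν) ≤ γ * (μ * d ^ (1 / δ)) := by
        have hsplit : d ^ (1 + ν) = d ^ (1 + ν - 1 / δ) * d ^ (1 / δ) := by
          rw [← Real.rpow_add hdpos]; ring_nf
        have hRe : ((γ * μ / ρ) ^ (δ / (δ * (1 + ν) - 1))) ^ (1 + ν - 1 / δ)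
            = γ * μ / ρ := by
          rw [← Real.rpow_mul hbase.le]
          have hexp1 : δ / (δ * (1 + ν) - 1) * (1 + ν - 1 / δ) = 1 := by
            field_simp
          rw [hexp1, Real.rpow_one]
        have h1 : d ^ (1 + ν - 1 / δ) ≤ γ * μ / ρ := by
          calc d ^ (1 + ν - 1 / δ)
              ≤ ((γ * μ / ρ) ^ (δ / (δ * (1 + ν) - 1))) ^ (1 + ν - 1 / δ) :=
                Real.rpow_le_rpow hdpos.le hkT.le he.le
            _ = γ * μ / ρ := hRe
        rw [hsplit]
        have h2 : ρ * (d ^ (1 + ν - 1 / δ) * d ^ (1 / δ)) ≤ ρ * ((γ * μ / ρ) * d ^ (1 / δ)) := by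
          have := mul_le_mul_of_nonneg_right h1 hd1δ.le
          nlinarith
        calc ρ * (d ^ (1 + ν - 1 / δ) * d ^ (1 / δ)) ≤ ρ * ((γ * μ / ρ) * d ^ (1 / δ)) := h2
          _ = γ * (μ * d ^ (1 / δ)) := by field_simp
      have hρdγh : ρ * d ^ (1 + ν) ≤ γ * h :=
        le_trans hdnu (mul_le_mul_of_nonneg_left hHEBk hγ0.le)
      -- inner-product bound from the paraconvex subgradient inequality
      have hsub := hζsub k xs hxsX
      rw [hfxs, hnorm2] at hsub
      have hinner : (1 - γ) * h ≤ ⟪ζ k, x k - xs⟫ := by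
        have hneg : ⟪ζ k, xs - x k⟫ = -⟪ζ k, x k - xs⟫ := by
          rw [show xs - x k = -(x k - xs) by abel, inner_neg_right]
        rw [hneg] at hsub
        have hγh : γ * h = γ * h := rfl
        have hlin : h - ρ * d ^ (1 + ν) ≤ ⟪ζ k, x k - xs⟫ := by
          rw [hhdef]; linarith [hsub]
        have : (1 - γ) * h = h - γ * h := by ring
        linarith [hρdγh, hlin]
      have hζ0 : ζ k ≠ 0 := by
        intro hz
        rw [hz] at hinner
        simp only [inner_zero_left] at hinner
        have := mul_pos (by linarith : (0:ℝ) < 1 - γ) hpos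
        linarith
      obtain ⟨hmem1, hmin⟩ := (hupd k).2 hζ0
      set s := ‖ζ k‖ with hs
      have hspos : 0 < s := norm_pos_iff.mpr hζ0
      set β := h / (σ * s) / s with hβ
      set z := x k - β • ζ k with hzdef
      have hproj : ‖x (k + 1) - xs‖ ^ 2 ≤ ‖z - xs‖ ^ 2 :=
        proj_sq_le' hXcv hmem1 hxsX (fun y hy => hmin y hy)
      have hβval : β = h / (σ * s ^ 2) := by
        rw [hβ, div_div, show σ * s * s = σ * s ^ 2 by ring]
      have hexp : ‖z - xs‖ ^ 2 = d ^ 2 - 2 * β * ⟪ζ k, x k - xs⟫ + β ^ 2 * s ^ 2 := by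
        have h1 : z - xs = (x k - xs) - β • ζ k := by rw [hzdef]; abel
        rw [h1, norm_sub_sq_real, hnorm, real_inner_smul_right, norm_smul,
          Real.norm_eq_abs, mul_pow, sq_abs, ← hs, real_inner_comm (x k - xs) (ζ k)]
        ring
      have hI := hinner
      have hss : (0:ℝ) < s ^ 2 := by positivity
      have key1 : ‖z - xs‖ ^ 2 ≤ d ^ 2 - (2 * σ * (1 - γ) - 1) / σ ^ 2 * (h / s) ^ 2 := by
        rw [hexp, hβval]
        have hcoef : 0 < h / (σ * s ^ 2) := by positivity
        have h2 : d ^ 2 - 2 * (h / (σ * s ^ 2)) * ⟪ζ k, x k - xs⟫ + (h / (σ * s ^ 2)) ^ 2 * s ^ 2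
            ≤ d ^ 2 - 2 * (h / (σ * s ^ 2)) * ((1 - γ) * h) + (h / (σ * s ^ 2)) ^ 2 * s ^ 2 := by
          have h2' := mul_le_mul_of_nonneg_left hI
            (by positivity : (0:ℝ) ≤ 2 * (h / (σ * s ^ 2)))
          linarith
        have h3 : d ^ 2 - 2 * (h / (σ * s ^ 2)) * ((1 - γ) * h) + (h / (σ * s ^ 2)) ^ 2 * s ^ 2
            = d ^ 2 - (2 * σ * (1 - γ) - 1) / σ ^ 2 * (h / s) ^ 2 := by
          field_simp
          ring
        linarith
      -- h/s ≥ τ_k d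
      have hτk : τ * d ^ (1 / δ - 1) * d ≤ h / s := by
        have hdd : d ^ (1 / δ - 1) * d = d ^ (1 / δ) := by
          rw [← Real.rpow_add_one hdpos.ne' (1 / δ - 1)]
          norm_num
        have h1 : τ * d ^ (1 / δ - 1) * d = (μ * d ^ (1 / δ)) / L := by
          rw [hτ, mul_assoc, hdd]; ring
        rw [h1]
        exact div_le_div₀ hpos.le hHEBk hspos (hζL k)
      have hτknn : 0 ≤ τ * d ^ (1 / δ - 1) := by
        rw [hτ]
        positivity
      have hCnn : 0 ≤ (2 * σ * (1 - γ) - 1) / σ ^ 2 := by positivity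
      -- combine
      have hdk1 : Metric.infDist (x (k + 1)) Xstar ≤ ‖x (k + 1) - xs‖ := by
        rw [← dist_eq_norm]; exact Metric.infDist_le_dist_of_mem hxsXs
      have hdk1nn : 0 ≤ Metric.infDist (x (k + 1)) Xstar := Metric.infDist_nonneg
      have hsq : Metric.infDist (x (k + 1)) Xstar ^ 2 ≤ ‖x (k + 1) - xs‖ ^ 2 :=
        pow_le_pow_left₀ hdk1nn hdk1 2
      have hτd : (τ * d ^ (1 / δ - 1) * d) ^ 2 ≤ (h / s) ^ 2 := by
        have hlhsnn : 0 ≤ τ * d ^ (1 / δ - 1) * d := by positivity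
        exact pow_le_pow_left₀ hlhsnn hτk 2
      have hfin : Metric.infDist (x (k + 1)) Xstar ^ 2 ≤
          (1 - (2 * σ * (1 - γ) - 1) / σ ^ 2 * (τ * d ^ (1 / δ - 1)) ^ 2) * d ^ 2 := by
        have h4 : (2 * σ * (1 - γ) - 1) / σ ^ 2 * (τ * d ^ (1 / δ - 1) * d) ^ 2
            ≤ (2 * σ * (1 - γ) - 1) / σ ^ 2 * (h / s) ^ 2 :=
          mul_le_mul_of_nonneg_left hτd hCnn
        have h6 : (2 * σ * (1 - γ) - 1) / σ ^ 2 * (τ * d ^ (1 / δ - 1) * d) ^ 2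
            = (2 * σ * (1 - γ) - 1) / σ ^ 2 * (τ * d ^ (1 / δ - 1)) ^ 2 * d ^ 2 := by ring
        have h7 : (1 - (2 * σ * (1 - γ) - 1) / σ ^ 2 * (τ * d ^ (1 / δ - 1)) ^ 2) * d ^ 2
            = d ^ 2 - (2 * σ * (1 - γ) - 1) / σ ^ 2 * (τ * d ^ (1 / δ - 1)) ^ 2 * d ^ 2 := by
          ring
        rw [h7]
        rw [h6] at h4
        linarith [hsq, hproj, key1, h4]
      refine ⟨hmem1, ?_, ?_⟩
      · rw [if_neg hxs]
        exact hfin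
      · -- contraction of distances
        have h5 : Metric.infDist (x (k + 1)) Xstar ^ 2 ≤ d ^ 2 := by
          have h8 : 0 ≤ (2 * σ * (1 - γ) - 1) / σ ^ 2 * (τ * d ^ (1 / δ - 1)) ^ 2 * d ^ 2 :=
            mul_nonneg (mul_nonneg hCnn (sq_nonneg _)) (sq_nonneg d)
          have h9 : (1 - (2 * σ * (1 - γ) - 1) / σ ^ 2 * (τ * d ^ (1 / δ - 1)) ^ 2) * d ^ 2
              = d ^ 2 - (2 * σ * (1 - γ) - 1) / σ ^ 2 * (τ * d ^ (1 / δ - 1)) ^ 2 * d ^ 2 := by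
            ring
          rw [h9] at hfin
          linarith
        exact (abs_le_of_sq_le_sq' h5 hdpos.le).2
  -- membership invariant
  have mem : ∀ k : ℕ, x k ∈ X ∧ Metric.infDist (x k) Xstar <
      (γ * μ / ρ) ^ (δ / (δ * (1 + ν) - 1)) := by
    intro k
    induction k with
    | zero => exact hx0
    | succ k ih =>
      obtain ⟨h1, _, h3⟩ := step k ih.1 ih.2
      exact ⟨h1, lt_of_le_of_lt h3 ih.2⟩
  refine ⟨fun k => ⟨mem k, (step k (mem k).1 (mem k).2).2.1⟩, ?_⟩
  -- part (b)
  intro hδeq k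
  set A := 1 - (2 * σ * (1 - γ) - 1) / σ ^ 2 * τ ^ 2 with hA
  by_cases hxs : x k ∈ Xstar
  · have hd0 : Metric.infDist (x k) Xstar = 0 := Metric.infDist_zero_of_mem hxs
    have hst := (step k (mem k).1 (mem k).2).2.1
    rw [if_pos hxs, hd0] at hst
    have hst' : Metric.infDist (x (k + 1)) Xstar ^ 2 ≤ (0:ℝ) ^ 2 := by
      norm_num at hst ⊢
      exact hst
    have hz : Metric.infDist (x (k + 1)) Xstar ≤ 0 :=
      (abs_le_of_sq_le_sq' hst' le_rfl).2
    have hz' : Metric.infDist (x (k + 1)) Xstar = 0 :=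
      le_antisymm hz Metric.infDist_nonneg
    rw [hz', hd0, mul_zero]
  · have hdpos : 0 < Metric.infDist (x k) Xstar :=
      (hXstarcl.notMem_iff_infDist_pos hXstarne).1 hxs
    have hst := (step k (mem k).1 (mem k).2).2.1
    rw [if_neg hxs] at hst
    have hexp0 : (1:ℝ) / δ - 1 = 0 := by rw [hδeq]; norm_num
    rw [hexp0, Real.rpow_zero, mul_one] at hst
    have hAnn : 0 ≤ A := by
      rw [hA]
      by_contra hneg
      push_neg at hneg
      have h1 : (1 - (2 * σ * (1 - γ) - 1) / σ ^ 2 * τ ^ 2) * Metric.infDist (x k) Xstar ^ 2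
          < 0 := mul_neg_of_neg_of_pos hneg (pow_pos hdpos 2)
      have h2 : 0 ≤ Metric.infDist (x (k + 1)) Xstar ^ 2 := sq_nonneg _
      linarith
    calc Metric.infDist (x (k + 1)) Xstar
        = Real.sqrt (Metric.infDist (x (k + 1)) Xstar ^ 2) :=
          (Real.sqrt_sq Metric.infDist_nonneg).symm
      _ ≤ Real.sqrt (A * Metric.infDist (x k) Xstar ^ 2) :=
          Real.sqrt_le_sqrt (by rw [hA]; exact hst)
      _ = Real.sqrt A * Metric.infDist (x k) Xstar := by
          rw [Real.sqrt_mul hAnn, Real.sqrt_sq hdpos.le]
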